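/- The map ν, sending a weight η with |η|_i = 0 for i = 2,…,N−1 and (u,v) = κ^{-1}(η) to the N-tuple ν(η)_1 = |η|_1 − v_1, ν(η)_i = v_{i−1} − v_i for 2 ≤ i ≤ N−1, ν(η)_N = v_{N−1}, satisfies: η lies in the positive integrable cone Q^{++} if and only if ν(η) is a partition (weakly decreasing sequence of nonnegative integers). -/
import Mathlib


/-- For g = sl_N (vertices 1,…,N−1 of the A_{N−1} graph,
with the convention u i = v i = 0 for i = 0 and i ≥ N), let
(Av) i = 2 v i − v (i−1) − v (i+1) for 1 ≤ i ≤ N−1, and let η = κ(u,v),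
so |η| = u − v + Av.  Suppose |η|_i = 0 for i = 2,…,N−1.  Define
ν(η)_1 = |η|_1 − v_1 and ν(η)_i = v_{i−1} − v_i for 2 ≤ i ≤ N (note
ν(η)_N = v_{N−1} since v_N = 0).  Then η is a positive integrable weight
(i.e. u ≥ 0, v ≥ 0, u − v ≥ 0 and |η| = u − v + Av ≥ 0) if and only if
ν(η) is a partition: ν(η)_N ≥ 0 and ν(η)_1 ≥ ν(η)_2 ≥ ⋯ ≥ ν(η)_N ≥ 0. -/
theorem nu_partition_iff_positive_integrable (N : ℕ) (hN : 2 ≤ N)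
    (u v : ℕ → ℤ)
    (hsupp : ∀ i, i = 0 ∨ N ≤ i → u i = 0 ∧ v i = 0)
    (Av d nu : ℕ → ℤ)
    (hAv : ∀ i, Av i = if 1 ≤ i ∧ i ≤ N - 1
      then 2 * v i - v (i - 1) - v (i + 1) else 0)
    (hd : ∀ i, d i = u i - v i + Av i)
    (hd2 : ∀ i, 2 ≤ i → d i = 0)
    (hnu : ∀ i, nu i = if i = 1 then d 1 - v 1 else v (i - 1) - v i) :
    ((∀ i, 0 ≤ u i) ∧ (∀ i, 0 ≤ v i) ∧
      (∀ i, 0 ≤ u i - v i) ∧ (∀ i, 0 ≤ d i)) ↔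
    ((∀ i, 1 ≤ i → i ≤ N → 0 ≤ nu i) ∧
      (∀ i j, 1 ≤ i → i ≤ j → j ≤ N → nu j ≤ nu i)) := by
  have hu0 : u 0 = 0 := (hsupp 0 (Or.inl rfl)).1
  have hv0 : v 0 = 0 := (hsupp 0 (Or.inl rfl)).2
  have hvN : ∀ i, N ≤ i → v i = 0 := fun i h => (hsupp i (Or.inr h)).2
  -- Key lemma: for 1 ≤ i ≤ N-1, nu i - nu (i+1) = u i - v i.
  have hL : ∀ i, 1 ≤ i → i + 1 ≤ N → nu i - nu (i + 1) = u i - v i := by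
    intro i h1 h2
    have hAvi : Av i = 2 * v i - v (i - 1) - v (i + 1) := by
      rw [hAv i, if_pos ⟨h1, by omega⟩]
    have hnui1 : nu (i + 1) = v i - v (i + 1) := by
      rw [hnu (i + 1), if_neg (by omega), Nat.add_sub_cancel]
    rcases eq_or_lt_of_le h1 with h1' | h1'
    · subst h1'
      have h1nu : nu 1 = d 1 - v 1 := by rw [hnu 1, if_pos rfl]
      have hd1 : d 1 = u 1 - v 1 + Av 1 := hd 1
      have : v (1 - 1) = 0 := hv0
      rw [h1nu, hnui1, hd1, hAvi]
      simp only [this]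
      ring
    · have hnui : nu i = v (i - 1) - v i := by rw [hnu i, if_neg (by omega)]
      have hdi : d i = 0 := hd2 i (by omega)
      have hdi' : d i = u i - v i + Av i := hd i
      rw [hnui, hnui1]
      rw [hAvi] at hdi'
      linarith
  constructor
  · rintro ⟨hu, hv, huv, hdpos⟩
    have mono : ∀ k, 1 ≤ k → k + 1 ≤ N → nu (k + 1) ≤ nu k := by
      intro k h1 h2
      have := hL k h1 h2
      have := huv k
      linarith
    have monoall : ∀ i j, 1 ≤ i → i ≤ j → j ≤ N → nu j ≤ nu i := by
      intro i j h1 hij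
      induction j, hij using Nat.le_induction with
      | base => intro _; exact le_refl _
      | succ j hij ih =>
        intro hjN
        exact le_trans (mono j (by omega) hjN) (ih (by omega))
    have hnuN : 0 ≤ nu N := by
      have : nu N = v (N - 1) - v N := by rw [hnu N, if_neg (by omega)]
      have h2 := hvN N le_rfl
      have h3 := hv (N - 1)
      linarith
    refine ⟨fun i h1 hiN => le_trans hnuN (monoall i N h1 hiN le_rfl), monoall⟩
  · rintro ⟨hpos, hmono⟩
    have hvnn : ∀ m i, N ≤ i + m → 0 ≤ v i := by
      intro m
      induction m with
      | zero => intro i h; rw [hvN i (by omega)]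
      | succ m ih =>
        intro i h
        by_cases hiN : N ≤ i
        · rw [hvN i hiN]
        · rcases Nat.eq_zero_or_pos i with h0 | h0
          · subst h0; rw [hv0]
          · have hnui : nu (i + 1) = v i - v (i + 1) := by
              rw [hnu (i + 1), if_neg (by omega), Nat.add_sub_cancel]
            have h1 := hpos (i + 1) (by omega) (by omega)
            have h2 := ih (i + 1) (by omega)
            linarith
    have hv : ∀ i, 0 ≤ v i := fun i => hvnn N i (by omega)
    have huv : ∀ i, 0 ≤ u i - v i := by
      intro i
      by_cases hc : 1 ≤ i ∧ i + 1 ≤ N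
      · have h1 := hL i hc.1 hc.2
        have h2 := hmono i (i + 1) hc.1 (by omega) hc.2
        linarith
      · have : i = 0 ∨ N ≤ i := by omega
        obtain ⟨h1, h2⟩ := hsupp i this
        rw [h1, h2]
        norm_num
    have hu : ∀ i, 0 ≤ u i := by
      intro i
      have := huv i
      have := hv i
      linarith
    refine ⟨hu, hv, huv, ?_⟩
    intro i
    match i, hN with
    | 0, _ =>
      rw [hd 0, hAv 0, if_neg (by omega), hu0, hv0]
      norm_num
    | 1, _ =>
      have h1nu : nu 1 = d 1 - v 1 := by rw [hnu 1, if_pos rfl]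
      have h1 := hpos 1 le_rfl (by omega)
      have h2 := hv 1
      linarith
    | (n + 2), _ =>
      rw [hd2 (n + 2) (by omega)]
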